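/- arXiv:1612.08763 — 5 statements merged into one kernel-verified Lean document; each statement's English description precedes it below -/
import Mathlib

section
/- Let H be a finite directed graph in which any two vertices in the same connected component are joined by a unique simple directed path. Suppose i → j is an edge of H and let T_j be the unique j-tree and T_i the unique i-tree (which exist by uniqueness of simple paths). Then T_i is obtained from T_j by deleting the edge i → j and adding the edge j → ℓ, where j → ℓ is the first edge of the unique simple directed path from j to i. -/
/-- `l` is a simple directed path from `i` to `j` in the digraph `E`. -/
def IsSimplePath {V : Type*} (E : V → V → Prop) (i j : V) (l : List V) : Prop :=
  l.Chain' E ∧ l.Nodup ∧ l.head? = some i ∧ l.getLast? = some j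

/-- Two vertices lie in the same connected component of the underlying
undirected graph of the digraph `E`. -/
def SameComponent {V : Type*} (E : V → V → Prop) : V → V → Prop :=
  Relation.ReflTransGen (fun a b => E a b ∨ E b a)

/-- `T` is a spanning `i`-tree of the connected component of `i`. -/
def IsITree {V : Type*} (E : V → V → Prop) (i : V) (T : V → V → Prop) : Prop :=
  (∀ a b, T a b → E a b) ∧
  (∀ a b, T a b → SameComponent E i a ∧ SameComponent E i b) ∧
  (∀ b, ¬ T i b) ∧
  (∀ a, SameComponent E i a → a ≠ i → ∃! b, T a b) ∧
  (∀ a, SameComponent E i a → Relation.ReflTransGen T a i)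


/-!
When simple paths are unique, an edge `a → b` lies in the `i`-tree exactly when it is the first
edge of the simple path from `a` to `i`. For `a ∉ {i, j}` the first edges toward `i` and toward `j`
coincide: the path to `i` is extended by the edge `i → j` (or cut at `j`), and the path to `j` is
continued by the path `j → ℓ → ⋯ → i` (or cut at `i`). At `a = j` the first edge toward `i` is
`j → ℓ`, and at `a = i` the first edge toward `j` is `i → j`.
-/

section SimplePaths

variable {V : Type*} {E : V → V → Prop} {x y z : V} {l : List V}

namespace IsSimplePath

theorem head_eq {a : V} (h : IsSimplePath E x y (a :: l)) : a = x := by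
  simpa using h.2.2.1

theorem exists_eq_cons (h : IsSimplePath E x y l) : ∃ t, l = x :: t := by
  cases l with
  | nil => simp [IsSimplePath] at h
  | cons a t => exact ⟨t, by rw [h.head_eq]⟩

theorem sameComponent (h : IsSimplePath E x y l) : SameComponent E x y := by
  obtain ⟨t, rfl⟩ := h.exists_eq_cons
  obtain ⟨hchain, -, -, hlast⟩ := h
  refine List.relationReflTransGen_of_exists_isChain_cons t (hchain.imp fun _ _ => Or.inl) ?_
  simpa [List.getLast?_eq_some_getLast] using hlast

theorem mono {E' : V → V → Prop} (hE : ∀ a b, E a b → E' a b) (h : IsSimplePath E x y l) :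
    IsSimplePath E' x y l :=
  ⟨h.1.imp fun a b => hE a b, h.2⟩

theorem cons (hxy : E x y) (h : IsSimplePath E y z l) (hx : x ∉ l) :
    IsSimplePath E x z (x :: l) := by
  obtain ⟨t, rfl⟩ := h.exists_eq_cons
  exact ⟨h.1.cons_cons hxy, List.nodup_cons.2 ⟨hx, h.2.1⟩, rfl, by simpa using h.2.2.2⟩

theorem dropUntil {u v : List V} (h : IsSimplePath E x y (u ++ z :: v)) :
    IsSimplePath E z y (z :: v) := by
  have hsuf : z :: v <:+ u ++ z :: v := List.suffix_append u (z :: v)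
  exact ⟨h.1.suffix hsuf, hsuf.sublist.nodup h.2.1, rfl, by simpa using h.2.2.2⟩

theorem takeUntil {u v : List V} (h : IsSimplePath E x y (u ++ z :: v)) :
    IsSimplePath E x z (u ++ [z]) := by
  have hpre : u ++ [z] <+: u ++ z :: v := ⟨v, by simp⟩
  refine ⟨h.1.prefix hpre, hpre.sublist.nodup h.2.1, ?_, List.getLast?_concat⟩
  cases u <;> simpa using h.2.2.1

theorem append {m : List V} (h : IsSimplePath E x y l) (h' : IsSimplePath E y z (y :: m))
    (hdisj : ∀ w ∈ l, w ∉ m) : IsSimplePath E x z (l ++ m) := by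
  obtain ⟨hchain, hnodup, hhead, hlast⟩ := h
  have hl : l ≠ [] := by rintro rfl; simp at hhead
  refine ⟨hchain.append h'.1.tail fun a ha b hb => ?_, ?_, ?_, ?_⟩
  · rw [hlast, Option.mem_some_iff] at ha
    subst ha
    exact h'.1.rel_head? hb
  · exact List.nodup_append.2 ⟨hnodup, (List.nodup_cons.1 h'.2.1).2,
      fun a ha b hb hab => hdisj a ha (hab ▸ hb)⟩
  · rwa [List.head?_append_of_ne_nil _ hl]
  · cases m with
    | nil => simpa [hlast] using h'.2.2.2
    | cons b m => simpa using h'.2.2.2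

theorem concat (h : IsSimplePath E x y l) (hyz : E y z) (hz : z ∉ l) :
    IsSimplePath E x z (l ++ [z]) := by
  have hyl : y ∈ l := List.mem_of_getLast? h.2.2.2
  have hyz' : y ≠ z := fun h => hz (h ▸ hyl)
  exact h.append ⟨List.isChain_pair.2 hyz, by simpa using hyz', rfl, rfl⟩
    fun w hw hwz => hz (List.mem_singleton.1 hwz ▸ hw)

end IsSimplePath

theorem Relation.ReflTransGen.exists_isSimplePath (h : Relation.ReflTransGen E x y) :
    ∃ l, IsSimplePath E x y l := by
  induction h using Relation.ReflTransGen.head_induction_on with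
  | refl => exact ⟨[y], List.isChain_singleton y, List.nodup_singleton y, rfl, rfl⟩
  | @head a b hab _ ih =>
    obtain ⟨l, hl⟩ := ih
    by_cases ha : a ∈ l
    · obtain ⟨u, v, rfl⟩ := List.append_of_mem ha
      exact ⟨a :: v, hl.dropUntil⟩
    · exact ⟨a :: l, hl.cons hab ha⟩

theorem SameComponent.symm (h : SameComponent E x y) : SameComponent E y x :=
  have : Std.Symm fun a b : V => E a b ∨ E b a := ⟨fun _ _ => Or.symm⟩
  Relation.ReflTransGen.stdSymm.symm _ _ h

end SimplePaths

section FirstEdges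

variable {V : Type*} {E : V → V → Prop} {a b c d i : V} {T : V → V → Prop}

theorem IsSimplePath.eq_of_unique
    (hpath : ∀ i j, SameComponent E i j → ∃! l : List V, IsSimplePath E i j l)
    {x y : V} {l l' : List V} (h : IsSimplePath E x y l) (h' : IsSimplePath E x y l') : l = l' :=
  (hpath x y h.sameComponent).unique h h'

def IsFirstEdge (E : V → V → Prop) (a b c : V) : Prop :=
  ∃ s, IsSimplePath E a c (a :: b :: s)

theorem isFirstEdge_of_edge (hab : E a b) (hne : a ≠ b) : IsFirstEdge E a b b :=
  ⟨[], List.isChain_pair.2 hab, by simpa using hne, rfl, rfl⟩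

theorem IsSimplePath.isFirstEdge_of_mem {y z : V} {s : List V}
    (h : IsSimplePath E a y (a :: b :: s)) (hz : z ∈ a :: b :: s) (haz : a ≠ z) :
    IsFirstEdge E a b z := by
  obtain ⟨u, v, huv⟩ := List.append_of_mem hz
  cases u with
  | nil => exact absurd (List.cons_eq_cons.1 huv).1 haz
  | cons a' u =>
    obtain ⟨rfl, hbs⟩ := List.cons_eq_cons.1 huv
    obtain ⟨s', hs'⟩ : ∃ s', u ++ [z] = b :: s' := by
      cases u <;> simp_all
    have hpre := (huv ▸ h).takeUntil
    rw [List.cons_append, hs'] at hpre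
    exact ⟨s', hpre⟩

namespace IsFirstEdge

theorem ne (h : IsFirstEdge E a b c) : a ≠ c := by
  obtain ⟨s, -, hnodup, -, hlast⟩ := h
  rintro rfl
  rw [List.getLast?_cons_cons] at hlast
  exact (List.nodup_cons.1 hnodup).1 (List.mem_of_getLast? hlast)

theorem unique (hpath : ∀ i j, SameComponent E i j → ∃! l : List V, IsSimplePath E i j l)
    {b' : V} (h : IsFirstEdge E a b c) (h' : IsFirstEdge E a b' c) : b = b' := by
  obtain ⟨s, hs⟩ := h
  obtain ⟨s', hs'⟩ := h'
  exact (List.cons_eq_cons.1 (List.cons_eq_cons.1 (hs.eq_of_unique hpath hs')).2).1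

theorem trans_edge (h : IsFirstEdge E a b c) (hcd : E c d) (had : a ≠ d) :
    IsFirstEdge E a b d := by
  obtain ⟨s, hs⟩ := h
  by_cases hd : d ∈ a :: b :: s
  · exact hs.isFirstEdge_of_mem hd had
  · exact ⟨s ++ [d], by simpa using hs.concat hcd hd⟩

/-- If `a → b` starts the path to `d` but that path misses `c`, it can be continued by the path
from `d` to `c`: a common vertex `w` would give two simple paths from `w` to `d`, one avoiding `c`
and one ending with the edge `c → d`. -/
theorem of_trans_edge (hpath : ∀ i j, SameComponent E i j → ∃! l : List V, IsSimplePath E i j l)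
    (h : IsFirstEdge E a b d) (hcd : E c d) (hac : a ≠ c) : IsFirstEdge E a b c := by
  obtain ⟨s, hs⟩ := h
  by_cases hc : c ∈ a :: b :: s
  · exact hs.isFirstEdge_of_mem hc hac
  obtain ⟨q, hq, -⟩ := hpath d c (Relation.ReflTransGen.single (Or.inr hcd))
  obtain ⟨m, rfl⟩ := hq.exists_eq_cons
  have hdisj : ∀ w ∈ a :: b :: s, w ∉ m := by
    intro w hw hwm
    obtain ⟨u, v, rfl⟩ := List.append_of_mem hwm
    obtain ⟨u', v', huv'⟩ := List.append_of_mem hw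
    have hdv : d ∉ w :: v := fun hd =>
      (List.nodup_cons.1 hq.2.1).1 (List.mem_append_right u hd)
    have hwc : IsSimplePath E w c (w :: v) := hq.dropUntil (u := d :: u)
    have hwd : w :: v ++ [d] = w :: v' :=
      (hwc.concat hcd hdv).eq_of_unique hpath (huv' ▸ hs).dropUntil
    have hcv' : c ∈ w :: v' := hwd ▸ List.mem_append_left _ (List.mem_of_getLast? hwc.2.2.2)
    exact hc (huv' ▸ List.mem_append_right u' hcv')
  exact ⟨s ++ m, by simpa using hs.append hq hdisj⟩

end IsFirstEdge

theorem IsITree.isFirstEdge (hT : IsITree E i T) (hab : T a b) : IsFirstEdge E a b i := by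
  obtain ⟨hTE, hcomp, hroot, hout, hreach⟩ := hT
  have hai : a ≠ i := by
    rintro rfl
    exact hroot b hab
  obtain ⟨l, hl⟩ := (hreach a (hcomp a b hab).1).exists_isSimplePath
  obtain ⟨t, rfl⟩ := hl.exists_eq_cons
  cases t with
  | nil => exact absurd (by simpa [IsSimplePath] using hl.2.2.2) hai
  | cons b' s =>
    have hb' : b' = b :=
      (hout a (hcomp a b hab).1 hai).unique (List.isChain_cons_cons.1 hl.1).1 hab
    exact ⟨s, hb' ▸ hl.mono hTE⟩

theorem IsITree.rel_iff_isFirstEdge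
    (hpath : ∀ i j, SameComponent E i j → ∃! l : List V, IsSimplePath E i j l)
    (hT : IsITree E i T) : T a b ↔ IsFirstEdge E a b i := by
  refine ⟨hT.isFirstEdge, fun h => ?_⟩
  obtain ⟨s, hs⟩ := h
  obtain ⟨b', hb', -⟩ := hT.2.2.2.1 a hs.sameComponent.symm (IsFirstEdge.ne ⟨s, hs⟩)
  rwa [IsFirstEdge.unique hpath ⟨s, hs⟩ (hT.isFirstEdge hb')]

end FirstEdges

theorem stmt1_general {V : Type*} (E : V → V → Prop)
    (hpath : ∀ i j, SameComponent E i j → ∃! l : List V, IsSimplePath E i j l)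
    (i j ℓ : V) (hij : E i j)
    (Ti Tj : V → V → Prop) (hTi : IsITree E i Ti) (hTj : IsITree E j Tj)
    (rest : List V) (hp : IsSimplePath E j i (j :: ℓ :: rest)) :
    ∀ a b, Ti a b ↔ ((Tj a b ∧ ¬(a = i ∧ b = j)) ∨ (a = j ∧ b = ℓ)) := by
  intro a b
  have hjℓi : IsFirstEdge E j ℓ i := ⟨rest, hp⟩
  have hiji : IsFirstEdge E i j j := isFirstEdge_of_edge hij hjℓi.ne.symm
  rw [hTi.rel_iff_isFirstEdge hpath, hTj.rel_iff_isFirstEdge hpath]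
  by_cases haj : a = j
  · subst haj
    refine ⟨fun h => Or.inr ⟨rfl, h.unique hpath hjℓi⟩, ?_⟩
    rintro (⟨h, -⟩ | ⟨-, rfl⟩)
    · exact absurd rfl h.ne
    · exact hjℓi
  by_cases hai : a = i
  · subst hai
    refine ⟨fun h => absurd rfl h.ne, ?_⟩
    rintro (⟨h, hne⟩ | ⟨h, -⟩)
    · exact absurd ⟨rfl, h.unique hpath hiji⟩ hne
    · exact absurd h haj
  simp only [haj, hai, false_and, not_false_eq_true, and_true, or_false]
  exact ⟨fun h => h.trans_edge hij haj, fun h => h.of_trans_edge hpath hij hai⟩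

/-- under the unique-simple-path hypothesis, if `i → j` is an
edge, `T_j` is the (unique) `j`-tree and `T_i` the (unique) `i`-tree, and
`j → ℓ` is the first edge of the unique simple directed path from `j` to `i`,
then `T_i` is obtained from `T_j` by deleting the edge `i → j` and adding the
edge `j → ℓ`. -/
theorem stmt1 {V : Type*} [Fintype V] (E : V → V → Prop)
    (hpath : ∀ i j, SameComponent E i j → ∃! l : List V, IsSimplePath E i j l)
    (i j ℓ : V) (hij : E i j)
    (Ti Tj : V → V → Prop) (hTi : IsITree E i Ti) (hTj : IsITree E j Tj)
    (rest : List V) (hp : IsSimplePath E j i (j :: ℓ :: rest)) :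
    ∀ a b, Ti a b ↔ ((Tj a b ∧ ¬(a = i ∧ b = j)) ∨ (a = j ∧ b = ℓ)) :=
  stmt1_general E hpath i j ℓ hij Ti Tj hTi hTj rest hp
end

section
/- Let A be a real d × s matrix of rank d, and let J ⊆ {1,…,s} with #J = d−1 be such that the submatrix A_J of columns indexed by J has rank d−1. Define the vector r_J ∈ ℝ^s by r_{J,ℓ} = (−1)^{μ(ℓ,J)} det(A_{J∪{ℓ}}) for each ℓ, where μ(ℓ,J) is the sign of the permutation sorting ℓ followed by the ordered elements of J. Then r_J is a nonzero element of the row span of A whose support is minimal with respect to inclusion among supports of nonzero elements of the row span of A (i.e., r_J is a circuit of A). -/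
/-!
Laplace expansion along the first column writes `r_J = c ᵥ* A`, where `c` is the vector of signed
maximal minors of `A_J`; so `r_J` lies in the row space, and it vanishes on `J` because there the
determinant has a repeated column. A row-space vector `y ᵥ* A` vanishing on `J` has `y` in the left
kernel of `A_J`, a line since `rank A_J = d - 1`; hence it is a multiple of `r_J`, which gives
minimality of the support. Finally `r_J ≠ 0`: as `rank A = d`, some column of `A` lies outside the
span of the columns in `J`, and together with them it forms a basis.
-/

open Matrix Module Submodule

def IsCircuit {K ι : Type*} [Field K] (V : Submodule K (ι → K)) (r : ι → K) : Prop :=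
  r ≠ 0 ∧ r ∈ V ∧ ∀ w ∈ V, w ≠ 0 → Function.support w ⊆ Function.support r →
    Function.support w = Function.support r

namespace Matrix

section Circuit

variable {K ι m κ : Type*} [Field K] [Fintype m]

theorem finrank_ker_vecMulLinear_add_rank [Fintype ι] (M : Matrix m ι K) :
    finrank K (LinearMap.ker M.vecMulLinear) + M.rank = Fintype.card m := by
  rw [rank_eq_finrank_span_row, ← range_vecMulLinear, add_comm,
    LinearMap.finrank_range_add_finrank_ker, finrank_fintype_fun_eq_card]

theorem isCircuit_of_vanishing_cols [Fintype κ] (A : Matrix m ι K) (u : κ → ι)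
    (hu : Fintype.card m ≤ (A.submatrix id u).rank + 1) {r : ι → K}
    (hr : r ∈ span K (Set.range A.row)) (hr0 : r ≠ 0) (hru : ∀ k, r (u k) = 0) :
    IsCircuit (span K (Set.range A.row)) r := by
  refine ⟨hr0, hr, fun w hw hw0 hwr => ?_⟩
  rw [← range_vecMulLinear] at hr hw
  obtain ⟨c, rfl⟩ := hr
  obtain ⟨y, rfl⟩ := hw
  have mem_ker : ∀ x : m → K, (∀ k, (x ᵥ* A) (u k) = 0) →
      x ∈ LinearMap.ker (A.submatrix id u).vecMulLinear := fun x hx => by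
    ext k
    simpa [vecMul, dotProduct] using hx k
  have hc : c ∈ LinearMap.ker (A.submatrix id u).vecMulLinear := mem_ker c hru
  have hker : LinearMap.ker (A.submatrix id u).vecMulLinear = K ∙ c := by
    refine (eq_of_le_of_finrank_le ((span_singleton_le_iff_mem _ _).2 hc) ?_).symm
    have hc0 : c ≠ 0 := by rintro rfl; simp at hr0
    have := (A.submatrix id u).finrank_ker_vecMulLinear_add_rank
    rw [finrank_span_singleton hc0]
    omega
  have hy : y ∈ K ∙ c := hker ▸ mem_ker y fun k => by
    by_contra h
    exact hwr h (hru k)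
  obtain ⟨t, rfl⟩ := mem_span_singleton.1 hy
  have ht : t ≠ 0 := by rintro rfl; simp at hw0
  simp only [vecMulLinear_apply, smul_vecMul] at hw0 hwr ⊢
  exact Function.support_const_smul_of_ne_zero t _ ht

end Circuit

section ConsMinors

variable {R ι : Type*} {n : ℕ}

def consMinors [CommRing R] (A : Matrix (Fin (n + 1)) ι R) (u : Fin n → ι) : ι → R :=
  fun ℓ => (A.submatrix id (Fin.cons ℓ u)).det

theorem consMinors_eq_vecMul [CommRing R] (A : Matrix (Fin (n + 1)) ι R) (u : Fin n → ι) :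
    A.consMinors u =
      (fun i : Fin (n + 1) => (-1) ^ (i : ℕ) * (A.submatrix i.succAbove u).det) ᵥ* A := by
  ext ℓ
  rw [consMinors, det_succ_column_zero, vecMul, dotProduct]
  refine Finset.sum_congr rfl fun i _ => ?_
  have hminor : (A.submatrix id (Fin.cons ℓ u)).submatrix i.succAbove Fin.succ =
      A.submatrix i.succAbove u := rfl
  simp only [hminor, submatrix_apply, id_eq, Fin.cons_zero]
  ring

theorem consMinors_mem_span_row [CommRing R] (A : Matrix (Fin (n + 1)) ι R) (u : Fin n → ι) :
    A.consMinors u ∈ span R (Set.range A.row) := by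
  rw [← range_vecMulLinear, consMinors_eq_vecMul]
  exact LinearMap.mem_range_self _ _

theorem consMinors_apply_self [CommRing R] (A : Matrix (Fin (n + 1)) ι R) (u : Fin n → ι)
    (k : Fin n) : A.consMinors u (u k) = 0 :=
  det_zero_of_column_eq (Fin.succ_ne_zero k).symm fun _ => rfl

theorem consMinors_ne_zero [Field R] [Fintype ι] (A : Matrix (Fin (n + 1)) ι R)
    (hA : A.rank = n + 1) {u : Fin n → ι} (hu : LinearIndependent R (A.col ∘ u)) :
    A.consMinors u ≠ 0 := by
  obtain ⟨ℓ, hℓ⟩ : ∃ ℓ, A.col ℓ ∉ span R (Set.range (A.col ∘ u)) := by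
    by_contra! h
    have hle := finrank_mono (span_le.2 (Set.range_subset_iff.2 h))
    have := finrank_range_le_card (R := R) (A.col ∘ u)
    rw [← rank_eq_finrank_span_cols, hA] at hle
    rw [Set.finrank, Fintype.card_fin] at this
    omega
  have hcol : (A.submatrix id (Fin.cons ℓ u)).col = Fin.cons (A.col ℓ) (A.col ∘ u) := by
    ext k i
    cases k using Fin.cases <;> rfl
  have hli : LinearIndependent R (A.submatrix id (Fin.cons ℓ u)).col := by
    rw [hcol]
    exact linearIndependent_finCons.2 ⟨hu, hℓ⟩
  exact Function.ne_iff.2 ⟨ℓ, (isUnit_iff_isUnit_det _).1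
    (linearIndependent_cols_iff_isUnit.1 hli) |>.ne_zero⟩

theorem isCircuit_consMinors [Field R] [Fintype ι] (A : Matrix (Fin (n + 1)) ι R)
    (hA : A.rank = n + 1) {u : Fin n → ι} (hu : (A.submatrix id u).rank = n) :
    IsCircuit (span R (Set.range A.row)) (A.consMinors u) := by
  have hli : LinearIndependent R (A.submatrix id u).col := by
    rw [linearIndependent_iff_card_eq_finrank_span, Fintype.card_fin]
    exact hu.symm.trans (rank_eq_finrank_span_cols _)
  exact A.isCircuit_of_vanishing_cols u (by rw [hu, Fintype.card_fin])
    (A.consMinors_mem_span_row u) (A.consMinors_ne_zero hA hli) (A.consMinors_apply_self u)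

end ConsMinors

end Matrix

/-- the vector of signed maximal minors `r_J` attached to a set
`J` of `d − 1` linearly independent columns of a rank-`d` matrix `A` is a
circuit of `A`: a nonzero vector in the row span of `A` with inclusion-minimal
support.  Here `r_J ℓ` is the determinant of the `d × d` submatrix of `A` with
columns `ℓ` followed by the elements of `J` in increasing order, which equals
`(−1)^{μ(ℓ,J)} det(A_{J ∪ {ℓ}})`. -/
theorem stmt2 {d s : ℕ} (hd : 0 < d) (A : Matrix (Fin d) (Fin s) ℝ)
    (hA : A.rank = d) (J : Finset (Fin s)) (hJ : J.card = d - 1)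
    (hAJ : (A.submatrix id (fun j : {x // x ∈ J} => (j : Fin s))).rank = d - 1) :
    let cols : Fin s → Fin d → Fin s := fun ℓ k =>
      if hk : (k : ℕ) = 0 then ℓ
      else J.orderEmbOfFin hJ ⟨(k : ℕ) - 1, by have := k.isLt; omega⟩
    let r : Fin s → ℝ := fun ℓ => (A.submatrix id (cols ℓ)).det
    r ≠ 0 ∧ r ∈ Submodule.span ℝ (Set.range fun k => A k) ∧
      ∀ w ∈ Submodule.span ℝ (Set.range fun k => A k), w ≠ 0 →
        {i | w i ≠ 0} ⊆ {i | r i ≠ 0} → {i | w i ≠ 0} = {i | r i ≠ 0} := by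
  obtain ⟨n, rfl⟩ : ∃ n, d = n + 1 := ⟨d - 1, by omega⟩
  intro cols r
  have hJ' : J.card = n := hJ
  have hcols : ∀ ℓ, cols ℓ = Fin.cons ℓ (J.orderEmbOfFin hJ') := fun ℓ => by
    ext k
    cases k using Fin.cases <;> rfl
  have hr : r = A.consMinors (J.orderEmbOfFin hJ') := funext fun ℓ => by
    simp only [r, hcols, consMinors]
  have hu : (A.submatrix id (J.orderEmbOfFin hJ')).rank = n := by
    rwa [← rank_submatrix _ (Equiv.refl _) (J.orderIsoOfFin hJ').toEquiv,
      submatrix_submatrix] at hAJ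
  rw [hr]
  exact A.isCircuit_consMinors hA hu
end

section
/- Let B ∈ ℤ^{s×r} and let T ⊆ ℝ^s be the column span of B. The monomial map φ(x) = x^B on ℝ^s_{>0} fails to be injective on some coset (x⁰ + S) ∩ ℝ^s_{>0} (for some x⁰ ∈ ℝ^s_{>0}) if and only if there exist nonzero vectors v ∈ T^⊥ and w ∈ S with sign(v) = sign(w) (coordinatewise). -/
/-!
Write a pair of positive points as `x₂ = exp(v) ⊙ x₁` with `v = log x₂ - log x₁`. Then
`x₂ ^ B = exp (Bᵀ v) ⊙ x₁ ^ B`, so `x₁` and `x₂` have the same image under the monomial map iff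
`v ∈ Tᗮ`, while `x₂ - x₁ ∈ S` and, coordinatewise, `x₂ - x₁` has the sign of `v` because `log` is
increasing. Conversely, given `v` and `w` of equal signs, each equation `exp(vᵢ) aᵢ - aᵢ = wᵢ` has
a positive solution `aᵢ`, and `x₁ = a`, `x₂ = exp(v) ⊙ a` is a non-injective pair on `a + S`.
-/

open Real

theorem StrictMonoOn.sign_sub_eq {f : ℝ → ℝ} {D : Set ℝ} (hf : StrictMonoOn f D) {a b : ℝ}
    (ha : a ∈ D) (hb : b ∈ D) : Real.sign (f b - f a) = Real.sign (b - a) := by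
  rcases lt_trichotomy a b with h | rfl | h
  · rw [sign_of_pos (sub_pos.2 (hf ha hb h)), sign_of_pos (sub_pos.2 h)]
  · simp
  · rw [sign_of_neg (sub_neg.2 (hf hb ha h)), sign_of_neg (sub_neg.2 h)]

theorem div_pos_of_sign_eq {a b : ℝ} (h : Real.sign a = Real.sign b) (hb : b ≠ 0) :
    0 < a / b := by
  have ha : a ≠ 0 := fun ha => hb (sign_eq_zero_iff.1 (by rw [← h, ha, sign_zero]))
  rw [← mul_div_mul_left a b (mt sign_eq_zero_iff.1 hb)]
  exact div_pos (h ▸ sign_mul_pos_of_ne_zero a ha) (sign_mul_pos_of_ne_zero b hb)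

theorem exists_pos_exp_mul_sub_eq {v w : ℝ} (h : Real.sign v = Real.sign w) :
    ∃ a, 0 < a ∧ exp v * a - a = w := by
  by_cases hv : v = 0
  · refine ⟨1, one_pos, ?_⟩
    rw [hv, sign_zero, eq_comm, sign_eq_zero_iff] at h
    simp [hv, h]
  · have hd : exp v - 1 ≠ 0 := sub_ne_zero.2 (mt (exp_eq_one_iff v).1 hv)
    have hsign : Real.sign w = Real.sign (exp v - 1) := by
      simpa [h] using
        ((exp_strictMono.strictMonoOn Set.univ).sign_sub_eq (Set.mem_univ 0) (Set.mem_univ v)).symm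
    exact ⟨w / (exp v - 1), div_pos_of_sign_eq hsign hd, by field_simp⟩

theorem prod_exp_mul_zpow {ι : Type*} [Fintype ι] (v x : ι → ℝ) (b : ι → ℤ) :
    ∏ i, (exp (v i) * x i) ^ b i = exp (∑ i, b i * v i) * ∏ i, x i ^ b i := by
  simp_rw [mul_zpow, Finset.prod_mul_distrib, exp_sum, ← rpow_intCast, ← exp_mul, mul_comm]

theorem prod_zpow_eq_prod_exp_mul_zpow_iff {ι : Type*} [Fintype ι] {x : ι → ℝ}
    (hx : ∀ i, 0 < x i) (v : ι → ℝ) (b : ι → ℤ) :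
    ∏ i, x i ^ b i = ∏ i, (exp (v i) * x i) ^ b i ↔ ∑ i, b i * v i = 0 := by
  rw [prod_exp_mul_zpow, eq_comm,
    mul_eq_right₀ (Finset.prod_pos fun i _ => zpow_pos (hx i) _).ne', exp_eq_one_iff]

theorem mem_orthogonal_span_range_iff {ι E : Type*} [NormedAddCommGroup E]
    [InnerProductSpace ℝ E] (u : ι → E) (v : E) :
    v ∈ (Submodule.span ℝ (Set.range u))ᗮ ↔ ∀ j, inner ℝ (u j) v = 0 := by
  rw [← Submodule.span_singleton_le_iff_mem, ← Submodule.isOrtho_iff_le, Submodule.isOrtho_span]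
  simp [real_inner_comm]

theorem mem_orthogonal_span_columns_iff {s r : ℕ} (B : Matrix (Fin s) (Fin r) ℤ)
    (v : EuclideanSpace ℝ (Fin s)) :
    v ∈ (Submodule.span ℝ (Set.range fun j : Fin r =>
      (WithLp.toLp 2 (fun i => (B i j : ℝ)) : EuclideanSpace ℝ (Fin s))))ᗮ ↔
      ∀ j, ∑ i, (B i j : ℝ) * v i = 0 := by
  simp [mem_orthogonal_span_range_iff, PiLp.inner_apply, mul_comm]

/-- the monomial map `x ↦ x^B` fails to be injective on some
coset `(x⁰ + S) ∩ ℝ^s_{>0}` iff there are nonzero `v ∈ T^⊥` and `w ∈ S` with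
the same sign vector, where `T` is the column span of `B`. -/
theorem stmt11 {s r : ℕ} (B : Matrix (Fin s) (Fin r) ℤ)
    (S T : Submodule ℝ (EuclideanSpace ℝ (Fin s)))
    (hT : T = Submodule.span ℝ
      (Set.range fun j : Fin r => (WithLp.toLp 2 (fun i => (B i j : ℝ)) : EuclideanSpace ℝ (Fin s)))) :
    (∃ x0 x1 x2 : EuclideanSpace ℝ (Fin s),
      (∀ i, 0 < x0 i) ∧ (∀ i, 0 < x1 i) ∧ (∀ i, 0 < x2 i) ∧ x1 ≠ x2 ∧
      x1 - x0 ∈ S ∧ x2 - x0 ∈ S ∧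
      ∀ j, (∏ i, x1 i ^ B i j) = ∏ i, x2 i ^ B i j) ↔
    (∃ v ∈ Tᗮ, ∃ w ∈ S, v ≠ 0 ∧ w ≠ 0 ∧
      ∀ i, Real.sign (v i) = Real.sign (w i)) := by
  subst hT
  simp only [mem_orthogonal_span_columns_iff]
  constructor
  · rintro ⟨x0, x1, x2, -, h1, h2, hne, hS1, hS2, hprod⟩
    set v : EuclideanSpace ℝ (Fin s) := WithLp.toLp 2 fun i => log (x2 i) - log (x1 i)
    have hx2 : ∀ i, x2 i = exp (v i) * x1 i := fun i => by
      simp [v, exp_sub, exp_log (h1 i), exp_log (h2 i), (h1 i).ne']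
    refine ⟨v, fun j => ?_, x2 - x1, by simpa using S.sub_mem hS2 hS1, fun hv => hne ?_,
      sub_ne_zero.2 hne.symm, fun i => strictMonoOn_log.sign_sub_eq (h1 i) (h2 i)⟩
    · simp_rw [hx2] at hprod
      exact (prod_zpow_eq_prod_exp_mul_zpow_iff h1 v (B · j)).1 (hprod j)
    · ext i
      simp [hx2 i, hv]
  · rintro ⟨v, hv, w, hw, hv0, hw0, hsign⟩
    choose a ha haw using fun i => exists_pos_exp_mul_sub_eq (hsign i)
    set x1 : EuclideanSpace ℝ (Fin s) := WithLp.toLp 2 a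
    set x2 : EuclideanSpace ℝ (Fin s) := WithLp.toLp 2 fun i => exp (v i) * a i
    have hdiff : x2 - x1 = w := by ext i; exact haw i
    refine ⟨x1, x1, x2, ha, ha, fun i => mul_pos (exp_pos _) (ha i), fun h => hw0 ?_,
      by simp, hdiff ▸ hw, fun j => (prod_zpow_eq_prod_exp_mul_zpow_iff ha v (B · j)).2 (hv j)⟩
    rw [← hdiff, h, sub_self]
end

section
/- Let M ∈ ℝ^{s×(s−d)} and B ∈ ℝ^{s×(s−d)} be matrices of full column rank s−d, and let M^⊥, B^⊥ ∈ ℝ^{d×s} have rows forming bases of the orthogonal complements of the column spans of M and B respectively. Define the four sign sets Σ = {sign(det(Mᵀ_I) det(Bᵀ_I)) : I ⊆ [s], #I = s−d}, Σ^⊥ = {sign((−1)^{ν(J)} det(M^⊥_J) det(Bᵀ_{J^c})) : #J = d}, Σ_⊥ = {sign((−1)^{ν(J)} det(Mᵀ_{J^c}) det(B^⊥_J)) : #J = d}, and Σ^⊥_⊥ = {sign(det(M^⊥_J) det(B^⊥_J)) : #J = d}, where ν(J) = ∑_{j∈J} j. Then if any one of these four sets is different from {0}, all four are; and in that case, if any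 one of them contains both +1 and −1, then all four do. -/
/-!
Stacking `M^⊥` on `Mᵀ` gives an invertible `s × s` matrix `C`: its Gram matrix is block diagonal
with blocks `M^⊥ M^⊥ᵀ` and `MᵀM`. Multiplying `C` by `[E_J | M]`, where `E_J` selects the
coordinates in `J`, and comparing determinants shows `det M^⊥_J = c (-1)^ν(J) det Mᵀ_{Jᶜ}` with
`c ≠ 0` independent of `J`: the inversions of the shuffle `(J, Jᶜ)` are the pairs `x < y` with
`x ∉ J`, `y ∈ J`, and there are `ν(J) - d - d(d-1)/2` of them. Hence `Σ^⊥`, `Σ_⊥` and `Σ^⊥_⊥` are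
the images of `Σ` under multiplication by fixed signs `±1`, which preserve both properties.
-/

open Finset Matrix

namespace Finset

theorem sum_card_Iio_inter {α : Type*} [LinearOrder α] [LocallyFiniteOrderBot α]
    (J : Finset α) : ∑ y ∈ J, #(Iio y ∩ J) = (#J).choose 2 := by
  induction J using Finset.induction_on_max with
  | empty => simp
  | insert a J hlt ih =>
    have ha : a ∉ J := fun h => lt_irrefl a (hlt a h)
    have hIio : Iio a ∩ insert a J = J := by
      ext x
      simp only [mem_inter, mem_Iio, mem_insert]
      exact ⟨fun ⟨hx, h⟩ => h.resolve_left hx.ne, fun h => ⟨hlt x h, .inr h⟩⟩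
    have hIio' : ∀ y ∈ J, #(Iio y ∩ insert a J) = #(Iio y ∩ J) := fun y hy => by
      rw [inter_insert_of_notMem (by simpa using (hlt y hy).le)]
    rw [sum_insert ha, hIio, sum_congr rfl hIio', ih, card_insert_of_notMem ha,
      Nat.choose_succ_succ', Nat.choose_one_right]

variable {α : Type*} [Fintype α] [LinearOrder α] {m n : ℕ}

def sumComplEquiv (J : Finset α) (hm : #J = m) (hn : #Jᶜ = n) : Fin m ⊕ Fin n ≃ α :=
  (Equiv.sumCongr (J.orderIsoOfFin hm).toEquiv
    ((Jᶜ.orderIsoOfFin hn).toEquiv.trans (Equiv.subtypeEquivRight fun _ => mem_compl))).trans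
    (Equiv.sumCompl (· ∈ J))

@[simp]
theorem sumComplEquiv_inl (J : Finset α) (hm : #J = m) (hn : #Jᶜ = n) (k : Fin m) :
    J.sumComplEquiv hm hn (.inl k) = J.orderEmbOfFin hm k := rfl

@[simp]
theorem sumComplEquiv_inr (J : Finset α) (hm : #J = m) (hn : #Jᶜ = n) (k : Fin n) :
    J.sumComplEquiv hm hn (.inr k) = Jᶜ.orderEmbOfFin hn k := rfl

section Shuffle

variable {s : ℕ}

theorem finSumFinEquiv_sumComplEquiv_symm_lt_iff (h : m + n = s) (J : Finset (Fin s))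
    (hm : #J = m) (hn : #Jᶜ = n) {x y : Fin s} (hxy : x < y) :
    (finSumFinEquiv.trans (finCongr h)) ((J.sumComplEquiv hm hn).symm x) <
      (finSumFinEquiv.trans (finCongr h)) ((J.sumComplEquiv hm hn).symm y) ↔ x ∈ J ∨ y ∉ J := by
  obtain ⟨p, rfl⟩ := (J.sumComplEquiv hm hn).surjective x
  obtain ⟨q, rfl⟩ := (J.sumComplEquiv hm hn).surjective y
  simp only [Equiv.symm_apply_apply]
  have hJ (k : Fin m) : J.orderEmbOfFin hm k ∈ J := J.orderEmbOfFin_mem hm k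
  have hJc (k : Fin n) : Jᶜ.orderEmbOfFin hn k ∉ J := mem_compl.1 (Jᶜ.orderEmbOfFin_mem hn k)
  rcases p with k | k <;> rcases q with l | l <;>
    simp only [sumComplEquiv_inl, sumComplEquiv_inr, OrderEmbedding.lt_iff_lt] at hxy <;>
    simp [hJ, hJc, hxy, Fin.lt_def] <;>
    omega

theorem sign_sumComplEquiv_eq_neg_one_pow_card_sdiff (h : m + n = s) (J : Finset (Fin s))
    (hm : #J = m) (hn : #Jᶜ = n) :
    Equiv.Perm.sign ((finSumFinEquiv.trans (finCongr h)).symm.trans (J.sumComplEquiv hm hn)) =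
      (-1) ^ ∑ y ∈ J, #(Iio y \ J) := by
  rw [← Equiv.Perm.sign_inv, Equiv.Perm.sign_eq_prod_prod_Iio]
  calc _ = ∏ y, if y ∈ J then ∏ x ∈ Iio y, (if x ∈ J then 1 else -1) else (1 : ℤˣ) := by
        refine prod_congr rfl fun y _ => ?_
        split_ifs with hy
        · refine prod_congr rfl fun x hx => ?_
          simp only [Equiv.Perm.inv_def, Equiv.symm_trans_apply, Equiv.symm_symm,
            finSumFinEquiv_sumComplEquiv_symm_lt_iff h J hm hn (mem_Iio.1 hx), hy, not_true,
            or_false]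
        · refine prod_eq_one fun x hx => ?_
          simp only [Equiv.Perm.inv_def, Equiv.symm_trans_apply, Equiv.symm_symm,
            finSumFinEquiv_sumComplEquiv_symm_lt_iff h J hm hn (mem_Iio.1 hx), hy,
            not_false_eq_true, or_true, if_true]
    _ = (-1) ^ ∑ y ∈ J, #(Iio y \ J) := by
        rw [prod_ite_mem univ J, univ_inter, ← prod_pow_eq_pow_sum]
        refine prod_congr rfl fun y _ => ?_
        rw [prod_ite, prod_const_one, one_mul, prod_const, filter_notMem_eq_sdiff]

theorem sign_sumComplEquiv (h : m + n = s) (J : Finset (Fin s)) (hm : #J = m) (hn : #Jᶜ = n) :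
    Equiv.Perm.sign ((finSumFinEquiv.trans (finCongr h)).symm.trans (J.sumComplEquiv hm hn)) =
      (-1) ^ (∑ j ∈ J, (j : ℕ) + m.choose 2) := by
  have hsum : ∑ y ∈ J, #(Iio y \ J) + m.choose 2 = ∑ j ∈ J, (j : ℕ) := by
    rw [← hm, ← sum_card_Iio_inter, ← sum_add_distrib]
    exact sum_congr rfl fun y _ => by rw [card_sdiff_add_card_inter, Fin.card_Iio]
  rw [sign_sumComplEquiv_eq_neg_one_pow_card_sdiff, ← hsum, add_assoc, ← two_mul, pow_add,
    pow_mul]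
  simp

end Shuffle

end Finset

namespace Matrix

theorem det_ne_zero_of_rank_eq_card {K ι : Type*} [Field K] [Fintype ι] [DecidableEq ι]
    {A : Matrix ι ι K} (h : A.rank = Fintype.card ι) : A.det ≠ 0 := by
  have hsurj : Function.Surjective A.mulVecLin := by
    rw [← LinearMap.range_eq_top]
    apply Submodule.eq_top_of_finrank_eq
    rw [← Matrix.rank, h, Module.finrank_fintype_fun_eq_card]
  intro hdet
  obtain ⟨v, hv, hAv⟩ := exists_mulVec_eq_zero_iff.mpr hdet
  exact hv (LinearMap.injective_iff_surjective.mpr hsurj (by simpa using hAv))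

variable {R : Type*} [CommRing R]

theorem det_submatrix_equiv_eq_sign_mul {ι α : Type*} [Fintype ι] [DecidableEq ι] [Fintype α]
    [DecidableEq α] (C : Matrix ι α R) (e e' : ι ≃ α) :
    (C.submatrix id e).det = Equiv.Perm.sign (e'.symm.trans e) * (C.submatrix id e').det := by
  have hC : C.submatrix id e = (C.submatrix id e').submatrix id (e.trans e'.symm) := by
    ext
    simp
  have hperm : (e'.symm.trans (e.trans e'.symm)).trans e' = e'.symm.trans e := by
    ext
    simp
  rw [hC, det_permute', ← Equiv.Perm.sign_symm_trans_trans _ e', hperm]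

variable {d n s : ℕ}

/- `[E | M]`, with `E` the columns of the identity indexed by `J`, turns `[Mp; Mᵀ]` into a block
lower triangular matrix, and becomes block upper triangular after listing `J` before `Jᶜ`. -/
theorem det_submatrix_mul_det_transpose_mul_self (M : Matrix (Fin s) (Fin n) R)
    (Mp : Matrix (Fin d) (Fin s) R) (hMo : Mp * M = 0) (J : Finset (Fin s)) (hJ : #J = d)
    (hJc : #Jᶜ = n) :
    (Mp.submatrix id (J.orderEmbOfFin hJ)).det * (Mᵀ * M).det =
      ((fromRows Mp Mᵀ).submatrix id (J.sumComplEquiv hJ hJc)).det *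
        (Mᵀ.submatrix id (Jᶜ.orderEmbOfFin hJc)).det := by
  set E : Matrix (Fin s) (Fin d) R :=
    (1 : Matrix (Fin s) (Fin s) R).submatrix id (J.orderEmbOfFin hJ)
  have hlower : fromRows Mp Mᵀ * fromCols E M =
      fromBlocks (Mp.submatrix id (J.orderEmbOfFin hJ)) 0 (Mᵀ.submatrix id (J.orderEmbOfFin hJ))
        (Mᵀ * M) := by
    have hE {k : ℕ} (A : Matrix (Fin k) (Fin s) R) :
        A * E = A.submatrix id (J.orderEmbOfFin hJ) :=
      mul_submatrix_one (Equiv.refl _) _ A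
    rw [fromRows_mul_fromCols, hMo, hE, hE]
  have hupper : (fromCols E M).submatrix (J.sumComplEquiv hJ hJc) id =
      fromBlocks 1 (M.submatrix (J.orderEmbOfFin hJ) id) 0
        (M.submatrix (Jᶜ.orderEmbOfFin hJc) id) := by
    ext (i | i) (j | j) <;> simp [E, one_apply]
    exact fun h => absurd (h ▸ J.orderEmbOfFin_mem hJ j)
      (mem_compl.1 (Jᶜ.orderEmbOfFin_mem hJc i))
  have := congrArg det
    (submatrix_mul_equiv (fromRows Mp Mᵀ) (fromCols E M) id (J.sumComplEquiv hJ hJc) id)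
  rw [submatrix_id_id, hlower, det_mul, hupper, det_fromBlocks_zero₁₂, det_fromBlocks_zero₂₁,
    det_one, one_mul] at this
  rw [← this, ← det_transpose (M.submatrix _ _), transpose_submatrix]

/-- Junk value `0` unless `#I = k`. -/
noncomputable def minor {k : ℕ} (A : Matrix (Fin k) (Fin s) R) (I : Finset (Fin s)) : R :=
  if h : #I = k then (A.submatrix id (I.orderEmbOfFin h)).det else 0

theorem det_submatrix_orderEmbOfFin {k : ℕ} (A : Matrix (Fin k) (Fin s) R) {I : Finset (Fin s)}
    (h : #I = k) : (A.submatrix id (I.orderEmbOfFin h)).det = A.minor I := by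
  rw [minor, dif_pos h]

variable {K : Type*} [Field K] [LinearOrder K] [IsStrictOrderedRing K]

theorem det_fromRows_submatrix_ne_zero (M : Matrix (Fin s) (Fin n) K)
    (Mp : Matrix (Fin d) (Fin s) K) (hM : M.rank = n) (hMp : Mp.rank = d) (hMo : Mp * M = 0)
    (e : Fin d ⊕ Fin n ≃ Fin s) : ((fromRows Mp Mᵀ).submatrix id e).det ≠ 0 := by
  have hgram : (fromRows Mp Mᵀ).submatrix id e * ((fromRows Mp Mᵀ).submatrix id e)ᵀ =
      fromBlocks (Mp * Mpᵀ) 0 0 (Mᵀ * M) := by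
    rw [transpose_submatrix, submatrix_mul_equiv, submatrix_id_id, transpose_fromRows,
      fromRows_mul_fromCols, transpose_transpose, hMo, ← transpose_mul, hMo, transpose_zero]
  have hMp' : (Mp * Mpᵀ).det ≠ 0 :=
    det_ne_zero_of_rank_eq_card (by rw [rank_self_mul_transpose, hMp, Fintype.card_fin])
  have hM' : (Mᵀ * M).det ≠ 0 :=
    det_ne_zero_of_rank_eq_card (by rw [rank_transpose_mul_self, hM, Fintype.card_fin])
  have := congrArg det hgram
  rw [det_mul, det_fromBlocks_zero₁₂] at this
  exact left_ne_zero_of_mul (this ▸ mul_ne_zero hMp' hM')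

theorem exists_minor_eq_mul_minor_compl (h : d + n = s) (M : Matrix (Fin s) (Fin n) K)
    (Mp : Matrix (Fin d) (Fin s) K) (hM : M.rank = n) (hMp : Mp.rank = d) (hMo : Mp * M = 0) :
    ∃ c : K, c ≠ 0 ∧ ∀ J : Finset (Fin s),
      (-1) ^ (∑ j ∈ J, ((j : ℕ) + 1)) * Mp.minor J = c * Mᵀ.minor Jᶜ := by
  set e := finSumFinEquiv.trans (finCongr h)
  have hc₀ := det_fromRows_submatrix_ne_zero M Mp hM hMp hMo e
  have hM' : (Mᵀ * M).det ≠ 0 :=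
    det_ne_zero_of_rank_eq_card (by rw [rank_transpose_mul_self, hM, Fintype.card_fin])
  refine ⟨((fromRows Mp Mᵀ).submatrix id e).det / (Mᵀ * M).det * (-1) ^ (d.choose 2 + d),
    by simp [hc₀, hM'], fun J => ?_⟩
  by_cases hJ : #J = d
  · have hJc : #Jᶜ = n := by rw [card_compl, Fintype.card_fin, hJ]; omega
    have key := det_submatrix_mul_det_transpose_mul_self M Mp hMo J hJ hJc
    rw [det_submatrix_equiv_eq_sign_mul _ _ e, sign_sumComplEquiv h,
      det_submatrix_orderEmbOfFin, det_submatrix_orderEmbOfFin] at key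
    have hpow : (-1 : K) ^ (∑ j ∈ J, ((j : ℕ) + 1)) * (-1) ^ (∑ j ∈ J, (j : ℕ) + d.choose 2) =
        (-1) ^ (d.choose 2 + d) := by
      rw [sum_add_distrib, sum_const, hJ, smul_eq_mul, mul_one, ← pow_add,
        show ∑ j ∈ J, (j : ℕ) + d + (∑ j ∈ J, (j : ℕ) + d.choose 2) =
          d.choose 2 + d + 2 * ∑ j ∈ J, (j : ℕ) by ring, pow_add _ _ (2 * _), pow_mul]
      simp
    rw [← mul_left_inj' hM', mul_assoc _ (Mp.minor J), key]
    push_cast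
    rw [← mul_assoc, ← mul_assoc, hpow]
    field_simp
  · have hJc : #Jᶜ ≠ n := by
      have := J.card_le_univ
      rw [card_compl, Fintype.card_fin] at *
      omega
    rw [minor, dif_neg hJ, minor, dif_neg hJc, mul_zero, mul_zero]

end Matrix

theorem Real.sign_mul (a b : ℝ) : Real.sign (a * b) = Real.sign a * Real.sign b := by
  rcases lt_trichotomy a 0 with ha | rfl | ha <;> rcases lt_trichotomy b 0 with hb | rfl | hb <;>
    simp [Real.sign_of_neg, Real.sign_of_pos, mul_pos_of_neg_of_neg, mul_neg_of_neg_of_pos,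
      mul_neg_of_pos_of_neg, *]

theorem Set.image_mul_left_eq_singleton_zero_iff {M₀ : Type*} [MulZeroClass M₀]
    [IsLeftCancelMulZero M₀]
    {ε : M₀} (hε : ε ≠ 0) {S : Set M₀} : (ε * ·) '' S = {0} ↔ S = {0} := by
  have := (Set.image_injective.mpr (mul_right_injective₀ hε)).eq_iff (a := S) (b := {0})
  rwa [Set.image_singleton, mul_zero] at this

theorem Set.neg_one_mem_and_one_mem_image_mul_left_iff {R : Type*} [Ring R] {ε : R}
    (hε : ε = -1 ∨ ε = 1) {S : Set R} :
    (-1 ∈ (ε * ·) '' S ∧ 1 ∈ (ε * ·) '' S) ↔ (-1 ∈ S ∧ 1 ∈ S) := by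
  rcases hε with rfl | rfl <;> simp [and_comm]

theorem setOf_sign_eq_image_sign_mul {d s : ℕ} (hd : d ≤ s) {c : ℝ}
    {f g : Finset (Fin s) → ℝ} (hfg : ∀ J, f J = c * g Jᶜ) :
    {t | ∃ J : Finset (Fin s), #J = d ∧ t = Real.sign (f J)} =
      (Real.sign c * ·) '' {t | ∃ I : Finset (Fin s), #I = s - d ∧ t = Real.sign (g I)} := by
  ext t
  simp only [Set.mem_ofPred_eq, Set.mem_image, hfg, Real.sign_mul]
  constructor
  · rintro ⟨J, hJ, rfl⟩
    exact ⟨_, ⟨Jᶜ, by simp [card_compl, hJ], rfl⟩, rfl⟩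
  · rintro ⟨_, ⟨I, hI, rfl⟩, rfl⟩
    refine ⟨Iᶜ, ?_, by rw [compl_compl]⟩
    have := I.card_le_univ
    rw [card_compl, Fintype.card_fin] at *
    omega

theorem setOf_sign_eq_image_sign_mul' {d s : ℕ} (hd : d ≤ s) {c : ℝ}
    {f g : Finset (Fin s) → ℝ} (hfg : ∀ J, f J = c * g Jᶜ) :
    {t | ∃ J : Finset (Fin s), #J = d ∧ #Jᶜ = s - d ∧ t = Real.sign (f J)} =
      (Real.sign c * ·) '' {t | ∃ I : Finset (Fin s), #I = s - d ∧ t = Real.sign (g I)} := by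
  rw [← setOf_sign_eq_image_sign_mul hd hfg]
  refine Set.ext fun t => exists_congr fun J => and_congr_right fun hJ => and_iff_right ?_
  simp [card_compl, hJ]

/-- for matrices `M`, `B` of full column rank `s − d` and
matrices `M^⊥`, `B^⊥` whose rows form bases of the respective orthogonal
complements, the four sign sets `Σ`, `Σ^⊥`, `Σ_⊥`, `Σ^⊥_⊥` are
simultaneously `≠ {0}`, and in that case simultaneously mixed. -/
theorem stmt12 {s d : ℕ} (hd : d ≤ s)
    (M B : Matrix (Fin s) (Fin (s - d)) ℝ)
    (Mp Bp : Matrix (Fin d) (Fin s) ℝ)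
    (hMrank : M.rank = s - d) (hBrank : B.rank = s - d)
    (hMprank : Mp.rank = d) (hBprank : Bp.rank = d)
    (hMo : Mp * M = 0) (hBo : Bp * B = 0) :
    let Sig : Set ℝ := {t | ∃ I : Finset (Fin s), ∃ hI : I.card = s - d,
      t = Real.sign ((M.transpose.submatrix id (I.orderEmbOfFin hI)).det *
                     (B.transpose.submatrix id (I.orderEmbOfFin hI)).det)}
    let SigU : Set ℝ := {t | ∃ J : Finset (Fin s), ∃ hJ : J.card = d,
      ∃ hJc : Jᶜ.card = s - d,
      t = Real.sign ((-1 : ℝ) ^ (∑ j ∈ J, ((j : ℕ) + 1)) *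
        ((Mp.submatrix id (J.orderEmbOfFin hJ)).det *
         (B.transpose.submatrix id (Jᶜ.orderEmbOfFin hJc)).det))}
    let SigL : Set ℝ := {t | ∃ J : Finset (Fin s), ∃ hJ : J.card = d,
      ∃ hJc : Jᶜ.card = s - d,
      t = Real.sign ((-1 : ℝ) ^ (∑ j ∈ J, ((j : ℕ) + 1)) *
        ((M.transpose.submatrix id (Jᶜ.orderEmbOfFin hJc)).det *
         (Bp.submatrix id (J.orderEmbOfFin hJ)).det))}
    let SigUL : Set ℝ := {t | ∃ J : Finset (Fin s), ∃ hJ : J.card = d,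
      t = Real.sign ((Mp.submatrix id (J.orderEmbOfFin hJ)).det *
        (Bp.submatrix id (J.orderEmbOfFin hJ)).det)}
    ((Sig ≠ {0} ∨ SigU ≠ {0} ∨ SigL ≠ {0} ∨ SigUL ≠ {0}) →
      (Sig ≠ {0} ∧ SigU ≠ {0} ∧ SigL ≠ {0} ∧ SigUL ≠ {0})) ∧
    ((Sig ≠ {0} ∨ SigU ≠ {0} ∨ SigL ≠ {0} ∨ SigUL ≠ {0}) →
      ((-1 ∈ Sig ∧ 1 ∈ Sig) ∨ (-1 ∈ SigU ∧ 1 ∈ SigU) ∨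
       (-1 ∈ SigL ∧ 1 ∈ SigL) ∨ (-1 ∈ SigUL ∧ 1 ∈ SigUL)) →
      ((-1 ∈ Sig ∧ 1 ∈ Sig) ∧ (-1 ∈ SigU ∧ 1 ∈ SigU) ∧
       (-1 ∈ SigL ∧ 1 ∈ SigL) ∧ (-1 ∈ SigUL ∧ 1 ∈ SigUL))) := by
  intro Sig SigU SigL SigUL
  obtain ⟨cM, hcM, hM⟩ :=
    exists_minor_eq_mul_minor_compl (Nat.add_sub_cancel' hd) M Mp hMrank hMprank hMo
  obtain ⟨cB, hcB, hB⟩ :=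
    exists_minor_eq_mul_minor_compl (Nat.add_sub_cancel' hd) B Bp hBrank hBprank hBo
  have hsq (J : Finset (Fin s)) : ((-1 : ℝ) ^ ∑ j ∈ J, ((j : ℕ) + 1)) ^ 2 = 1 := by
    rw [← pow_mul, pow_mul', neg_one_sq, one_pow]
  have hSig : Sig = {t | ∃ I : Finset (Fin s), #I = s - d ∧
      t = Real.sign (Mᵀ.minor I * Bᵀ.minor I)} := by
    simp only [Sig, det_submatrix_orderEmbOfFin, exists_prop]
  have hU : SigU = (Real.sign cM * ·) '' Sig := by
    simp only [SigU, det_submatrix_orderEmbOfFin, exists_prop, hSig]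
    exact setOf_sign_eq_image_sign_mul' hd fun J => by linear_combination Bᵀ.minor Jᶜ * hM J
  have hL : SigL = (Real.sign cB * ·) '' Sig := by
    simp only [SigL, det_submatrix_orderEmbOfFin, exists_prop, hSig]
    exact setOf_sign_eq_image_sign_mul' hd fun J => by linear_combination Mᵀ.minor Jᶜ * hB J
  have hUL : SigUL = (Real.sign (cM * cB) * ·) '' Sig := by
    simp only [SigUL, det_submatrix_orderEmbOfFin, exists_prop, hSig]
    exact setOf_sign_eq_image_sign_mul hd fun J => by
      linear_combination congrArg₂ HMul.hMul (hM J) (hB J) - Mp.minor J * Bp.minor J * hsq J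
  have hcMB := mul_ne_zero hcM hcB
  simp only [hU, hL, hUL, ne_eq, Set.image_mul_left_eq_singleton_zero_iff,
    Set.neg_one_mem_and_one_mem_image_mul_left_iff, Real.sign_eq_zero_iff,
    Real.sign_apply_eq_of_ne_zero, hcM, hcB, hcMB, not_false_eq_true, or_self, and_self]
  exact ⟨id, fun _ => id⟩
end

section
/- Let G be a strongly connected finite labeled digraph on n vertices with positive edge labels, and let L(G) be its Laplacian matrix (so that the linear mass-action system is ẋ = L(G)x and each column of L(G) sums to zero). Then ker(L(G)) is one-dimensional and is spanned by the vector ρ(G) whose i-th coordinate is ρ(G)_i = ∑_{T an i-tree of G} c^T, where c^T is the product of the labels of the edges of T; moreover every coordinate ρ(G)_i is strictly positive. -/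
/-!
Both sides of `(L ρ)ᵢ = 0` count, with weights, the functional subgraphs of `G` in which every
vertex flows into a cycle through `i`: adding to an `i`-tree an edge out of `i`, or adding to a
`j`-tree the edge `j → i`, produces each such subgraph exactly once, the added edge being the one
leaving `i`, resp. the one entering `i` along the cycle. An `i`-tree exists (take a shortest-path
tree), so `ρ > 0`. If `L x = 0` and `t = maxⱼ xⱼ / ρⱼ`, then `y = t ρ - x` is a nonnegative kernel
vector vanishing somewhere; since the off-diagonal entries of `L` are nonnegative, a zero of `y`
at `u` forces zeros at every `v → u`, so strong connectivity gives `y = 0`.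
-/

open Finset Function Relation Matrix

namespace Function

variable {α : Type*}

theorem iterate_update_of_forall_ne [DecidableEq α] {f : α → α} {a x : α} (b : α) {m : ℕ}
    (h : ∀ t < m, f^[t] x ≠ a) : (update f a b)^[m] x = f^[m] x := by
  induction m with
  | zero => rfl
  | succ m ih =>
    rw [iterate_succ_apply', iterate_succ_apply', ih fun t ht => h t (ht.trans m.lt_succ_self),
      update_of_ne (h m m.lt_succ_self)]

theorem exists_iterate_update_eq [DecidableEq α] {f : α → α} {a x : α} (b : α)
    (h : ∃ m, f^[m] x = a) : ∃ m, (update f a b)^[m] x = a := by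
  classical
  exact ⟨Nat.find h, by
    rw [iterate_update_of_forall_ne b fun t => Nat.find_min h, Nat.find_spec h]⟩

theorem IsPeriodicPt.eq_of_iterate_eq_isFixedPt {f : α → α} {x y : α} {t k : ℕ}
    (hx : IsPeriodicPt f t x) (ht : 0 < t) (hy : IsFixedPt f y) (hk : f^[k] x = y) : x = y :=
  calc x = f^[t * k] x := (hx.mul_const k).eq.symm
    _ = f^[t * k - k] y := by
      rw [← hk, ← iterate_add_apply, Nat.sub_add_cancel (Nat.le_mul_of_pos_left k ht)]
    _ = y := (hy.iterate _).eq

noncomputable def cyclePred (f : α → α) (x : α) : α := f^[minimalPeriod f x - 1] x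

theorem apply_cyclePred {f : α → α} {x : α} (hx : x ∈ periodicPts f) :
    f (cyclePred f x) = x := by
  rw [cyclePred, ← iterate_succ_apply' f, Nat.succ_eq_add_one,
    Nat.sub_add_cancel (minimalPeriod_pos_of_mem_periodicPts hx)]
  exact iterate_minimalPeriod

theorem cyclePred_update_of_isFixedPt [DecidableEq α] {f : α → α} {x y : α}
    (hy : IsFixedPt f y) (hxy : ∃ k, f^[k] x = y) : cyclePred (update f y x) x = y := by
  classical
  -- the `g`-orbit of `x` follows the `f`-path to `y` and jumps back to `x`; it cannot close up
  -- earlier, since a periodic point that reaches the fixed point `y` is `y` itself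
  set g := update f y x with hg
  have hk : f^[Nat.find hxy] x = y := Nat.find_spec hxy
  set k := Nat.find hxy
  have hgf : ∀ t ≤ k, g^[t] x = f^[t] x := fun t ht =>
    iterate_update_of_forall_ne x fun s hs => Nat.find_min hxy (hs.trans_le ht)
  have hper : IsPeriodicPt g (k + 1) x := by
    rw [IsPeriodicPt, IsFixedPt, iterate_succ_apply', hgf k le_rfl, hk, hg, update_self]
  have hpos := hper.minimalPeriod_pos k.succ_pos
  have hmp : minimalPeriod g x = k + 1 := by
    refine le_antisymm (hper.minimalPeriod_le k.succ_pos)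
      (Nat.succ_le_of_lt (lt_of_not_ge fun hle => ?_))
    have hne : x ≠ y := Nat.find_min hxy (hpos.trans_le hle)
    have hfper : IsPeriodicPt f (minimalPeriod g x) x := by
      rw [IsPeriodicPt, IsFixedPt, ← hgf _ hle]
      exact iterate_minimalPeriod
    exact hne (hfper.eq_of_iterate_eq_isFixedPt hpos hy hk)
  rw [cyclePred, hmp, Nat.add_sub_cancel, hgf k le_rfl, hk]

end Function

section RootedTrees

variable {α : Type*} (E : α → α → Prop)

/-- An `i`-tree, encoded by the map sending each `j ≠ i` to the head of its outgoing edge. -/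
def IsRootedTree (i : α) (f : α → α) : Prop :=
  f i = i ∧ ∀ j, j ≠ i → (E j (f j) ∧ ∃ k, f^[k] j = i)

/-- Since every vertex reaches `i`, the functional graph of `g` has a single cycle, through `i`. -/
def IsUnicycleThrough (i : α) (g : α → α) : Prop :=
  (∀ j, E j (g j)) ∧ ∀ v, ∃ m, g^[m] v = i

def ReachesIn (i : α) : ℕ → α → Prop
  | 0, j => j = i
  | k + 1, j => ∃ m, E j m ∧ ReachesIn i k m

variable {E} {i : α} {f g : α → α}

theorem IsRootedTree.exists_iterate_eq (hf : IsRootedTree E i f) (v : α) :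
    ∃ k, f^[k] v = i := by
  rcases eq_or_ne v i with rfl | hv
  · exact ⟨0, rfl⟩
  · exact (hf.2 v hv).2

theorem IsRootedTree.update_update [DecidableEq α] (hf : IsRootedTree E i f) (k : α) :
    update (update f i k) i i = f := by
  rw [update_idem, update_eq_iff]
  exact ⟨hf.1.symm, fun _ _ => rfl⟩

theorem IsRootedTree.isUnicycleThrough_update [DecidableEq α] (hf : IsRootedTree E i f) {k : α}
    (hk : E i k) : IsUnicycleThrough E i (update f i k) := by
  refine ⟨fun j => ?_, fun v => exists_iterate_update_eq k (hf.exists_iterate_eq v)⟩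
  rcases eq_or_ne j i with rfl | hj
  · rwa [update_self]
  · rw [update_of_ne hj]
    exact (hf.2 j hj).1

theorem IsUnicycleThrough.isRootedTree_update [DecidableEq α] (hg : IsUnicycleThrough E i g) :
    IsRootedTree E i (update g i i) := by
  refine ⟨update_self i i g, fun j hj => ?_⟩
  rw [update_of_ne hj]
  exact ⟨hg.1 j, exists_iterate_update_eq i (hg.2 j)⟩

theorem IsUnicycleThrough.iterate (hg : IsUnicycleThrough E i g) (m : ℕ) :
    IsUnicycleThrough E (g^[m] i) g := by
  refine ⟨hg.1, fun v => ?_⟩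
  obtain ⟨t, ht⟩ := hg.2 v
  exact ⟨m + t, by rw [iterate_add_apply, ht]⟩

theorem IsUnicycleThrough.mem_periodicPts (hg : IsUnicycleThrough E i g) : i ∈ periodicPts g := by
  obtain ⟨m, hm⟩ := hg.2 (g i)
  exact ⟨m + 1, m.succ_pos, by rw [IsPeriodicPt, IsFixedPt, iterate_succ_apply, hm]⟩

theorem exists_reachesIn {j : α} (h : ReflTransGen E j i) : ∃ k, ReachesIn E i k j := by
  induction h using ReflTransGen.head_induction_on with
  | refl => exact ⟨0, rfl⟩
  | head hab _ ih =>
    obtain ⟨k, hk⟩ := ih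
    exact ⟨k + 1, _, hab, hk⟩

theorem exists_isRootedTree (h : ∀ j, ReflTransGen E j i) : ∃ f, IsRootedTree E i f := by
  classical
  have hreach j := exists_reachesIn (h j)
  let d j := Nat.find (hreach j)
  have hd_zero : ∀ j, d j = 0 ↔ j = i := fun j => Nat.find_eq_zero (hreach j)
  have descent : ∀ j ≠ i, ∃ m, E j m ∧ d j = d m + 1 := by
    intro j hj
    obtain ⟨k, hk⟩ := Nat.exists_eq_add_one_of_ne_zero (mt (hd_zero j).1 hj)
    obtain ⟨m, hjm, hm⟩ : ReachesIn E i (k + 1) j := by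
      rw [← hk]
      exact Nat.find_spec (hreach j)
    have hdj : d j ≤ d m + 1 := Nat.find_le ⟨m, hjm, Nat.find_spec (hreach m)⟩
    have hdm : d m ≤ k := Nat.find_le hm
    exact ⟨m, hjm, by omega⟩
  choose next hnext_E hnext_d using descent
  let f j := if hj : j = i then i else next j hj
  have hf_iter : ∀ n j, d j = n → f^[n] j = i := by
    intro n
    induction n with
    | zero => exact fun j hj => (hd_zero j).1 hj
    | succ n ih =>
      intro j hj
      have hji : j ≠ i := fun h => by simp [h, (hd_zero i).2 rfl] at hj
      rw [iterate_succ_apply, show f j = next j hji from dif_neg hji]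
      exact ih _ (by have := hnext_d j hji; omega)
  refine ⟨f, dif_pos rfl, fun j hj => ⟨?_, d j, hf_iter _ j rfl⟩⟩
  rw [show f j = next j hj from dif_neg hj]
  exact hnext_E j hj

variable [Fintype α] [DecidableEq α] (E)

open Classical in
noncomputable def rootedTrees (i : α) : Finset (α → α) := univ.filter (IsRootedTree E i)

open Classical in
noncomputable def unicyclesThrough (i : α) : Finset (α → α) := univ.filter (IsUnicycleThrough E i)

noncomputable def rootedTreeSum {R : Type*} [CommSemiring R] (w : α → α → R) (i : α) : R :=
  ∑ f ∈ rootedTrees E i, ∏ j ∈ univ.erase i, w j (f j)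

variable {E}

theorem mem_rootedTrees : f ∈ rootedTrees E i ↔ IsRootedTree E i f := by
  simp [rootedTrees]

theorem mem_unicyclesThrough : g ∈ unicyclesThrough E i ↔ IsUnicycleThrough E i g := by
  simp [unicyclesThrough]

theorem prod_update_eq_mul_prod_erase {M : Type*} [CommMonoid M] (w : α → α → M) (f : α → α)
    (i k : α) : ∏ j, w j (update f i k j) = w i k * ∏ j ∈ univ.erase i, w j (f j) := by
  rw [← mul_prod_erase univ _ (mem_univ i), update_self]
  congr 1
  exact prod_congr rfl fun j hj => by rw [update_of_ne (ne_of_mem_erase hj)]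

variable {R : Type*} [CommSemiring R] [DecidableRel E]

theorem sum_out_mul_rootedTreeSum_eq_sum_unicyclesThrough (w : α → α → R) (i : α) :
    (∑ k ∈ univ with E i k, w i k) * rootedTreeSum E w i =
      ∑ g ∈ unicyclesThrough E i, ∏ j, w j (g j) := by
  rw [rootedTreeSum, sum_mul_sum, ← sum_product']
  refine sum_nbij' (fun p => update p.2 i p.1) (fun g => (g i, update g i i)) ?_ ?_ ?_ ?_ ?_
  · rintro ⟨k, f⟩ hp
    simp only [mem_product, mem_filter, mem_univ, true_and, mem_rootedTrees] at hp
    exact mem_unicyclesThrough.2 (hp.2.isUnicycleThrough_update hp.1)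
  · intro g hg
    rw [mem_unicyclesThrough] at hg
    simp only [mem_product, mem_filter, mem_univ, true_and, mem_rootedTrees]
    exact ⟨hg.1 i, hg.isRootedTree_update⟩
  · rintro ⟨k, f⟩ hp
    simp only [mem_product, mem_rootedTrees] at hp
    rw [update_self, hp.2.update_update]
  · intro g _
    rw [update_idem, update_eq_self]
  · rintro ⟨k, f⟩ -
    exact (prod_update_eq_mul_prod_erase w f i k).symm

theorem sum_in_mul_rootedTreeSum_eq_sum_unicyclesThrough (w : α → α → R) (i : α) :
    ∑ j ∈ univ with E j i, w j i * rootedTreeSum E w j =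
      ∑ g ∈ unicyclesThrough E i, ∏ j, w j (g j) := by
  simp_rw [rootedTreeSum, mul_sum]
  rw [sum_sigma']
  refine sum_nbij' (fun p => update p.2 p.1 i)
    (fun g => ⟨cyclePred g i, update g (cyclePred g i) (cyclePred g i)⟩) ?_ ?_ ?_ ?_ ?_
  · rintro ⟨j, f⟩ hp
    simp only [mem_sigma, mem_filter, mem_univ, true_and, mem_rootedTrees] at hp
    rw [mem_unicyclesThrough]
    simpa using (hp.2.isUnicycleThrough_update hp.1).iterate 1
  · intro g hg
    rw [mem_unicyclesThrough] at hg
    simp only [mem_sigma, mem_filter, mem_univ, true_and, mem_rootedTrees]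
    refine ⟨?_, (hg.iterate _).isRootedTree_update⟩
    have hedge := hg.1 (cyclePred g i)
    rwa [apply_cyclePred hg.mem_periodicPts] at hedge
  · rintro ⟨j, f⟩ hp
    simp only [mem_sigma, mem_rootedTrees] at hp
    have hpred : cyclePred (update f j i) i = j :=
      cyclePred_update_of_isFixedPt hp.2.1 (hp.2.exists_iterate_eq i)
    simp only [hpred, hp.2.update_update]
  · intro g hg
    rw [mem_unicyclesThrough] at hg
    simp only
    rw [update_idem, update_eq_iff]
    exact ⟨(apply_cyclePred hg.mem_periodicPts).symm, fun _ _ => rfl⟩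
  · rintro ⟨j, f⟩ -
    exact (prod_update_eq_mul_prod_erase w f j i).symm

theorem rootedTreeSum_balance (w : α → α → R) (i : α) :
    (∑ k ∈ univ with E i k, w i k) * rootedTreeSum E w i =
      ∑ j ∈ univ with E j i, w j i * rootedTreeSum E w j := by
  rw [sum_out_mul_rootedTreeSum_eq_sum_unicyclesThrough,
    sum_in_mul_rootedTreeSum_eq_sum_unicyclesThrough]

end RootedTrees

theorem rootedTreeSum_pos {α R : Type*} [Fintype α] [DecidableEq α] [CommSemiring R]
    [PartialOrder R] [IsStrictOrderedRing R] {E : α → α → Prop} {w : α → α → R} {i : α}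
    (hw : ∀ a b, E a b → 0 < w a b) (h : ∀ j, ReflTransGen E j i) :
    0 < rootedTreeSum E w i := by
  obtain ⟨f, hf⟩ := exists_isRootedTree h
  refine sum_pos (fun f hf => prod_pos fun j hj => hw _ _ ?_) ⟨f, mem_rootedTrees.2 hf⟩
  exact ((mem_rootedTrees.1 hf).2 j (ne_of_mem_erase hj)).1

namespace Matrix

variable {ι K : Type*} [Fintype ι] {E : ι → ι → Prop}

theorem eq_zero_of_nonneg_of_mulVec_eq_zero [Ring K] [LinearOrder K] [IsStrictOrderedRing K]
    {L : Matrix ι ι K} (hoff : ∀ u v, u ≠ v → 0 ≤ L u v)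
    (hedge : ∀ u v, u ≠ v → E v u → 0 < L u v) (hconn : ∀ u v, ReflTransGen E u v)
    {y : ι → K} (hy : 0 ≤ y) (hLy : L *ᵥ y = 0) {u : ι} (hu : y u = 0) : y = 0 := by
  have step : ∀ a b, E a b → y b = 0 → y a = 0 := by
    intro a b hab hb
    rcases eq_or_ne a b with rfl | hne
    · exact hb
    have hterms : ∀ j ∈ univ, 0 ≤ L b j * y j := fun j _ => by
      rcases eq_or_ne b j with rfl | hj
      · simp [hb]
      · exact mul_nonneg (hoff b j hj) (hy j)
    have hzero := (sum_eq_zero_iff_of_nonneg hterms).1 (congrFun hLy b) a (mem_univ a)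
    exact (mul_eq_zero.1 hzero).resolve_left (hedge b a hne.symm hab).ne'
  funext v
  exact (hconn v u).head_induction_on hu fun hab _ hb => step _ _ hab hb

theorem mulVec_eq_zero_iff_exists_eq_smul [Field K] [LinearOrder K] [IsStrictOrderedRing K]
    {L : Matrix ι ι K} (hoff : ∀ u v, u ≠ v → 0 ≤ L u v)
    (hedge : ∀ u v, u ≠ v → E v u → 0 < L u v) (hconn : ∀ u v, ReflTransGen E u v)
    {ρ : ι → K} (hρ : ∀ i, 0 < ρ i) (hLρ : L *ᵥ ρ = 0) (x : ι → K) :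
    L *ᵥ x = 0 ↔ ∃ t : K, x = t • ρ := by
  refine ⟨fun hx => ?_, by rintro ⟨t, rfl⟩; rw [mulVec_smul, hLρ, smul_zero]⟩
  cases isEmpty_or_nonempty ι
  · exact ⟨0, Subsingleton.elim _ _⟩
  obtain ⟨j₀, hj₀⟩ := Finite.exists_max fun j => x j / ρ j
  set t := x j₀ / ρ j₀
  have hy : 0 ≤ t • ρ - x := fun j => by
    simpa using (div_le_iff₀ (hρ j)).1 (hj₀ j)
  have hLy : L *ᵥ (t • ρ - x) = 0 := by rw [mulVec_sub, mulVec_smul, hLρ, hx, smul_zero, sub_zero]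
  have hy₀ : (t • ρ - x) j₀ = 0 := by simp [t, div_mul_cancel₀ _ (hρ j₀).ne']
  exact ⟨t, (sub_eq_zero.1 (eq_zero_of_nonneg_of_mulVec_eq_zero hoff hedge hconn hy hLy hy₀)).symm⟩

end Matrix

section WeightedLaplacian

variable {α : Type*} [Fintype α] [DecidableEq α]

def weightedLaplacian {R : Type*} [Ring R] (w : α → α → R) : Matrix α α R :=
  Matrix.of fun i j => if i = j then -(∑ k, w i k) else w j i

theorem weightedLaplacian_apply_of_ne {R : Type*} [Ring R] (w : α → α → R) {i j : α} (h : i ≠ j) :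
    weightedLaplacian w i j = w j i :=
  if_neg h

theorem weightedLaplacian_mulVec_apply {R : Type*} [CommRing R] {w : α → α → R}
    (hw : ∀ i, w i i = 0) (x : α → R) (i : α) :
    (weightedLaplacian w *ᵥ x) i = ∑ j, w j i * x j - (∑ k, w i k) * x i := by
  simp only [weightedLaplacian, mulVec, dotProduct, of_apply, ite_mul]
  rw [Fintype.sum_eq_add_sum_compl i, Fintype.sum_eq_add_sum_compl i fun j => w j i * x j,
    if_pos rfl, hw, zero_mul, zero_add]
  rw [sum_congr rfl fun j hj => if_neg (Ne.symm (by simpa using hj))]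
  ring

variable {E : α → α → Prop}

theorem weightedLaplacian_mulVec_rootedTreeSum {R : Type*} [CommRing R] {w : α → α → R}
    (hloop : ∀ i, ¬E i i) (hw : ∀ a b, ¬E a b → w a b = 0) :
    weightedLaplacian w *ᵥ rootedTreeSum E w = 0 := by
  classical
  have hw_edge a b : w a b ≠ 0 → E a b := fun h => by_contra fun hE => h (hw a b hE)
  funext i
  have hbal := rootedTreeSum_balance (E := E) w i
  rw [sum_filter_of_ne fun k _ => hw_edge i k,
    sum_filter_of_ne fun j _ h => hw_edge j i (left_ne_zero_of_mul h)] at hbal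
  rw [Pi.zero_apply, weightedLaplacian_mulVec_apply (fun i => hw i i (hloop i)), sub_eq_zero, hbal]

theorem weightedLaplacian_mulVec_eq_zero_iff {K : Type*} [Field K] [LinearOrder K]
    [IsStrictOrderedRing K] {w : α → α → K} (hloop : ∀ i, ¬E i i)
    (hw_pos : ∀ a b, E a b → 0 < w a b) (hw_zero : ∀ a b, ¬E a b → w a b = 0)
    (hconn : ∀ i j, ReflTransGen E i j) (x : α → K) :
    weightedLaplacian w *ᵥ x = 0 ↔ ∃ t : K, x = t • rootedTreeSum E w := by
  have hw_nonneg a b : 0 ≤ w a b := by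
    by_cases h : E a b
    · exact (hw_pos a b h).le
    · exact (hw_zero a b h).ge
  refine mulVec_eq_zero_iff_exists_eq_smul (fun u v h => ?_) (fun u v h e => ?_) hconn
    (fun i => rootedTreeSum_pos hw_pos fun j => hconn j i)
    (weightedLaplacian_mulVec_rootedTreeSum hloop hw_zero) x
  · rw [weightedLaplacian_apply_of_ne w h]
    exact hw_nonneg v u
  · rw [weightedLaplacian_apply_of_ne w h]
    exact hw_pos v u e

end WeightedLaplacian

open Classical in
/-- Matrix-Tree description of the kernel of the Laplacian of a
strongly connected positively labeled digraph: `ker L(G)` is spanned by the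
vector `ρ(G)` of sums over `i`-trees of the products of the edge labels, and
every coordinate of `ρ(G)` is strictly positive.  An `i`-tree is encoded by
the function sending each non-root vertex to the head of its unique outgoing
edge; the condition `∃ k, f^[k] j = i` says all paths are directed toward the
unique sink `i`. -/
theorem stmt13 {n : ℕ} (E : Fin n → Fin n → Prop) (c : Fin n → Fin n → ℝ)
    (hloop : ∀ i, ¬ E i i)
    (hpos : ∀ i j, E i j → 0 < c i j)
    (hconn : ∀ i j, Relation.ReflTransGen E i j) :
    let w : Fin n → Fin n → ℝ := fun i j => if E i j then c i j else 0
    let L : Matrix (Fin n) (Fin n) ℝ :=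
      Matrix.of fun i j => if i = j then -(∑ k, w i k) else w j i
    let IsITreeFun : Fin n → (Fin n → Fin n) → Prop := fun i f =>
      f i = i ∧ ∀ j, j ≠ i → (E j (f j) ∧ ∃ k, f^[k] j = i)
    let ρ : Fin n → ℝ := fun i =>
      ∑ f ∈ Finset.univ.filter (IsITreeFun i),
        ∏ j ∈ Finset.univ.erase i, w j (f j)
    (∀ i, 0 < ρ i) ∧
    ∀ x : Fin n → ℝ, L.mulVec x = 0 ↔ ∃ t : ℝ, x = t • ρ := by
  intro w L IsITreeFun ρ
  have hw_pos : ∀ a b, E a b → 0 < w a b := fun a b h => by simpa [w, h] using hpos a b h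
  have hw_zero : ∀ a b, ¬E a b → w a b = 0 := fun a b h => if_neg h
  -- the two filters carry different (but equal) decidability instances
  have hρ : ρ = rootedTreeSum E w := by
    ext i
    simp only [ρ, rootedTreeSum, rootedTrees]
    congr
  rw [hρ]
  exact ⟨fun i => rootedTreeSum_pos hw_pos fun j => hconn j i,
    weightedLaplacian_mulVec_eq_zero_iff hloop hw_pos hw_zero hconn⟩
end
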